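/- arXiv:2601.03749 — 2 statements merged into one kernel-verified Lean document; each statement's English description precedes it below -/
import Mathlib

section
/- Let x = ⟨x_β : β < α⟩ be a complete run of the diagonal game G_Δ. Then exactly one of the following holds: (1) for some k < ω, η_k^x = η_{k+1}^x = α; or (2) for all k < ω, η_k^x < η_{k+1}^x, and α = sup{η_k^x : k < ω}. -/
noncomputable section

/-- A real is an element of the Baire space ℕ^ℕ. -/
abbrev Real' : Type := ℕ → ℕ

/-- The binary relation on ℕ coded by a real: `m R_x n` iff `x ⟨m,n⟩ = 0`. -/
def woRel (x : Real') : ℕ → ℕ → Prop := fun m n => x (Nat.pair m n) = 0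

/-- `‖x‖_WO`: the order type of the coded relation if it is a well-order of ℕ,
and `0` otherwise. -/
noncomputable def woNorm (x : Real') : Ordinal :=
  @dite Ordinal (IsWellOrder ℕ (woRel x)) (Classical.dec _)
    (fun h => @Ordinal.type ℕ (woRel x) h) (fun _ => 0)

/-- The ordinals `η_k^x` for the sequence of reals `⟨x_β : β < α⟩` (values of `x` at
ordinals `≥ α` are irrelevant): `η_0 = 0`, `η_1 = 1`, and for `k ≥ 1`,
`η_{k+1} = sup {1 + ‖x_β‖_WO : β < min (η_k, α)}`. -/
noncomputable def eta (α : Ordinal) (x : Ordinal → Real') : ℕ → Ordinal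
  | 0 => 0
  | 1 => 1
  | (k + 2) => sSup {v : Ordinal | ∃ β < min (eta α x (k + 1)) α, v = 1 + woNorm (x β)}

/-- The length condition of the diagonal game holds at `α` for the sequence `x`:
`ω·α = sup {ω·(1 + ‖x_β‖_WO) : β < α}`. -/
def stopsAt (x : Ordinal → Real') (α : Ordinal) : Prop :=
  Ordinal.omega0 * α =
    sSup {v : Ordinal | ∃ β < α, v = Ordinal.omega0 * (1 + woNorm (x β))}

/-- `⟨x_β : β < α⟩` is a complete run of the diagonal game `G_Δ`: `α > 0` is the least
nonzero ordinal at which the length condition is met. -/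
def IsCompleteRun (x : Ordinal → Real') (α : Ordinal) : Prop :=
  0 < α ∧ stopsAt x α ∧ ∀ α' : Ordinal, 0 < α' → α' < α → ¬ stopsAt x α'

/-! Write `S(δ) = sup {1 + ‖x_β‖ : β < δ}`. Since `ω · -` is normal, the length condition at
`δ > 0` says exactly `S(δ) = δ`, and on a complete run `η_{k+2} = S(η_{k+1})` because `η ≤ α`.
So the supremum `λ` of the increasing sequence `η` satisfies `S(λ) = λ`, and minimality of `α`
forces `λ = α`; likewise, if two consecutive terms agree, that common value is a stopping point,
hence equals `α`. -/

open Set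

universe u

def supBelow (f : Ordinal.{u} → Ordinal.{u}) (δ : Ordinal.{u}) : Ordinal.{u} :=
  sSup {v | ∃ β < δ, v = f β}

section SupBelow

variable {f : Ordinal.{u} → Ordinal.{u}} {β δ γ : Ordinal.{u}}

theorem supBelow_eq_sSup_image (f : Ordinal.{u} → Ordinal.{u}) (δ : Ordinal.{u}) :
    supBelow f δ = sSup (f '' Iio δ) := by
  simp only [supBelow, image, mem_Iio, eq_comm]

theorem bddAbove_image_Iio (f : Ordinal.{u} → Ordinal.{u}) (δ : Ordinal.{u}) :
    BddAbove (f '' Iio δ) :=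
  Ordinal.bddAbove_of_small

theorem le_supBelow (hβ : β < δ) : f β ≤ supBelow f δ := by
  rw [supBelow_eq_sSup_image]
  exact le_csSup (bddAbove_image_Iio f δ) (mem_image_of_mem f hβ)

theorem supBelow_le (h : ∀ β < δ, f β ≤ γ) : supBelow f δ ≤ γ := by
  rw [supBelow_eq_sSup_image]
  exact csSup_le' (forall_mem_image.2 h)

theorem supBelow_mono : Monotone (supBelow f) := fun _ _ hδ =>
  supBelow_le fun _ hβ => le_supBelow (hβ.trans_le hδ)

theorem Order.IsNormal.map_supBelow {g : Ordinal.{u} → Ordinal.{u}} (hg : Order.IsNormal g)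
    (hδ : 0 < δ) : g (supBelow f δ) = supBelow (g ∘ f) δ := by
  rw [supBelow_eq_sSup_image, supBelow_eq_sSup_image, image_comp,
    hg.map_sSup (Nonempty.image f ⟨0, hδ⟩) (bddAbove_image_Iio f δ)]

end SupBelow

def weight (x : Ordinal → Real') (β : Ordinal) : Ordinal := 1 + woNorm (x β)

variable {α δ : Ordinal} {x : Ordinal → Real'}

theorem eta_one : eta α x 1 = 1 := rfl

theorem eta_add_two (k : ℕ) :
    eta α x (k + 2) = supBelow (weight x) (min (eta α x (k + 1)) α) := rfl

theorem stopsAt_iff_supBelow_eq (hδ : 0 < δ) : stopsAt x δ ↔ supBelow (weight x) δ = δ := by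
  have hω := Ordinal.isNormal_mul_right Ordinal.omega0_pos
  change Ordinal.omega0 * δ = supBelow ((Ordinal.omega0 * ·) ∘ weight x) δ ↔ _
  rw [← hω.map_supBelow hδ, hω.strictMono.injective.eq_iff, eq_comm]

theorem eta_succ_le_eta_add_two (hα : 0 < α) (k : ℕ) : eta α x (k + 1) ≤ eta α x (k + 2) := by
  induction k with
  | zero =>
    calc eta α x 1 = 1 := eta_one
      _ ≤ weight x 0 := le_self_add
      _ ≤ eta α x 2 := le_supBelow (lt_min zero_lt_one hα)
  | succ k ih =>
    exact supBelow_mono (min_le_min_right α ih)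

theorem eta_monotone (hα : 0 < α) : Monotone (eta α x) := by
  refine monotone_nat_of_le_succ fun k => ?_
  cases k with
  | zero => exact zero_le_one
  | succ k => exact eta_succ_le_eta_add_two hα k

namespace IsCompleteRun

variable (h : IsCompleteRun x α)
include h

theorem eq_of_stopsAt (hδ : 0 < δ) (hδα : δ ≤ α) (hstop : stopsAt x δ) : δ = α :=
  hδα.eq_of_not_lt fun hlt => h.2.2 δ hδ hlt hstop

theorem weight_le {β : Ordinal} (hβ : β < α) : weight x β ≤ α :=
  (le_supBelow hβ).trans ((stopsAt_iff_supBelow_eq h.1).1 h.2.1).le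

theorem eta_le (k : ℕ) : eta α x k ≤ α := by
  match k with
  | 0 => exact h.1.le
  | 1 => exact Order.one_le_iff_pos.2 h.1
  | k + 2 => exact supBelow_le fun β hβ => h.weight_le (hβ.trans_le (min_le_right _ _))

theorem supBelow_eta_succ (k : ℕ) :
    supBelow (weight x) (eta α x (k + 1)) = eta α x (k + 2) := by
  rw [eta_add_two, min_eq_left (h.eta_le (k + 1))]

theorem eta_succ_pos (k : ℕ) : 0 < eta α x (k + 1) :=
  zero_lt_one.trans_le (eta_monotone h.1 (Nat.le_add_left 1 k))

theorem eta_succ_eq_of_eta_eq {k : ℕ} (hk : eta α x k = eta α x (k + 1)) :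
    eta α x (k + 1) = α := by
  cases k with
  | zero => exact absurd hk zero_ne_one
  | succ k =>
    rw [← hk]
    refine h.eq_of_stopsAt (h.eta_succ_pos k) (h.eta_le _) ?_
    rw [stopsAt_iff_supBelow_eq (h.eta_succ_pos k), h.supBelow_eta_succ, hk]

theorem stopsAt_iSup_eta : stopsAt x (⨆ k, eta α x k) := by
  have hle := Ordinal.le_iSup (eta α x)
  have hpos : 0 < ⨆ k, eta α x k := (h.eta_succ_pos 0).trans_le (hle 1)
  rw [stopsAt_iff_supBelow_eq hpos]
  apply le_antisymm
  · refine supBelow_le fun β hβ => ?_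
    obtain ⟨k, hk⟩ := Ordinal.lt_iSup_iff.1 hβ
    calc weight x β ≤ supBelow (weight x) (eta α x (k + 1)) :=
          le_supBelow (hk.trans_le (eta_monotone h.1 k.le_succ))
      _ = eta α x (k + 2) := h.supBelow_eta_succ k
      _ ≤ ⨆ k, eta α x k := hle _
  · refine Ordinal.iSup_le fun k => ?_
    calc eta α x k ≤ eta α x (k + 2) := eta_monotone h.1 (Nat.le_add_right k 2)
      _ = supBelow (weight x) (eta α x (k + 1)) := (h.supBelow_eta_succ k).symm
      _ ≤ supBelow (weight x) (⨆ k, eta α x k) := supBelow_mono (hle _)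

theorem iSup_eta : ⨆ k, eta α x k = α :=
  h.eq_of_stopsAt ((h.eta_succ_pos 0).trans_le (Ordinal.le_iSup _ 1))
    (Ordinal.iSup_le h.eta_le) h.stopsAt_iSup_eta

end IsCompleteRun

/-- For every complete run `⟨x_β : β < α⟩` of `G_Δ`, exactly one of the following holds:
(1) for some `k < ω`, `η_k^x = η_{k+1}^x = α`; or (2) for all `k < ω`,
`η_k^x < η_{k+1}^x`, and `α = sup {η_k^x : k < ω}`. -/
theorem stmt3 (α : Ordinal) (x : Ordinal → Real') (h : IsCompleteRun x α) :
    Xor'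
      (∃ k : ℕ, eta α x k = eta α x (k + 1) ∧ eta α x (k + 1) = α)
      ((∀ k : ℕ, eta α x k < eta α x (k + 1)) ∧ α = ⨆ k : ℕ, eta α x k) := by
  refine (xor_iff_or_and_not_and _ _).2 ⟨?_, fun ⟨⟨k, hk, _⟩, hlt, _⟩ => (hlt k).ne hk⟩
  by_cases hstab : ∃ k, eta α x k = eta α x (k + 1)
  · obtain ⟨k, hk⟩ := hstab
    exact Or.inl ⟨k, hk, h.eta_succ_eq_of_eta_eq hk⟩
  · refine Or.inr ⟨fun k => ?_, h.iSup_eta.symm⟩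
    exact (eta_monotone h.1 k.le_succ).lt_of_ne fun hk => hstab ⟨k, hk⟩
end
end

section
/- Let α be an ordinal with 1 ≤ α < ω₁. Then the α-Solovay filter ℱ_α is a proper filter on [℘_{ω₁}(ℝ)]^{ω^α}: (i) the full set [℘_{ω₁}(ℝ)]^{ω^α} belongs to ℱ_α; (ii) ∅ ∉ ℱ_α; (iii) if Z ∈ ℱ_α and Z ⊆ Z' ⊆ [℘_{ω₁}(ℝ)]^{ω^α}, then Z' ∈ ℱ_α; and (iv) if Z₁, Z₂ ∈ ℱ_α, then Z₁ ∩ Z₂ ∈ ℱ_α. -/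
noncomputable section

/-- An ordinal is even iff it is of the form `λ + 2n` with `λ` zero or a limit
ordinal and `n < ω`; it is odd otherwise. -/
def OrdEven (ξ : Ordinal) : Prop :=
  ∃ lamb : Ordinal, ∃ n : ℕ, (lamb = 0 ∨ Order.IsSuccLimit lamb) ∧ ξ = lamb + 2 * n

/-- Sequences indexed by the ordinals below `ω^α`, with values sets of reals. -/
abbrev OrdSeq (α : Ordinal) : Type _ := Set.Iio (Ordinal.omega0 ^ α) → Set Real'

/-- `[℘_{ω₁}(ℝ)]^{ω^α}`: the `ω^α`-sequences all of whose values are countable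
sets of reals. -/
def FullSeqSet (α : Ordinal) : Set (OrdSeq α) := {f | ∀ η, (f η).Countable}

/-- A strategy for Player II: a function assigning a real to each position
`⟨x_ζ : ζ < ξ⟩` (used only at odd `ξ < ω^{1+α}`). -/
abbrev StratII : Type _ := (ξ : Ordinal) → ((Set.Iio ξ) → Real') → Real'

/-- The run `⟨p ξ : ξ < ω^{1+α}⟩` follows the strategy `F` of Player II:
at every odd `ξ < ω^{1+α}`, `p ξ` is the value of `F` at the current position. -/
def Follows (α : Ordinal) (F : StratII) (p : Ordinal → Real') : Prop :=
  ∀ ξ : Ordinal, ξ < Ordinal.omega0 ^ (1 + α) → ¬ OrdEven ξ →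
    p ξ = F ξ (fun ζ => p ζ.1)

/-- The sequence `⟨σ_η : η < ω^α⟩` produced by a run of the `α`-Solovay game, where
`σ_η = {x_ξ : ξ < ω·(1+η)}`. -/
def runSeq (α : Ordinal) (p : Ordinal → Real') : OrdSeq α :=
  fun η => {y | ∃ ξ < Ordinal.omega0 * (1 + η.1), y = p ξ}

/-- `F` is a winning strategy for Player II in the `α`-Solovay game `G^Sol_α(Z)`:
every run following `F` produces a sequence in `Z`. -/
def WinningII (α : Ordinal) (Z : Set (OrdSeq α)) (F : StratII) : Prop :=
  ∀ p : Ordinal → Real', Follows α F p → runSeq α p ∈ Z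

/-- The `α`-Solovay filter `ℱ_α`: all `Z ⊆ [℘_{ω₁}(ℝ)]^{ω^α}` such that Player II
has a winning strategy in `G^Sol_α(Z)`. -/
def SolovayFilter (α : Ordinal) : Set (Set (OrdSeq α)) :=
  {Z | Z ⊆ FullSeqSet α ∧ ∃ F : StratII, WinningII α Z F}
/-!
Each `σ_η` is enumerated by `ω * (1 + η)`, a countable ordinal since `η < ω ^ α < ω₁`. Every
strategy is followed by some run, so `∅ ∉ ℱ_α`. For intersections Player II plays two auxiliary
games inside every `ω`-block: in game `i`, Player I's move `ω * η + 2 * n` is the actual move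
`ω * η + n`, and Player II's answer `ω * η + (2 * k + 1)` is played at `ω * η + (4 * k + 2 * i - 1)`.
Both auxiliary runs contain, block by block, exactly the reals of the actual run, so all three
produce the same sequence `⟨σ_η⟩`.
-/

open Ordinal Cardinal

section Countability

lemma countable_Iio_of_card_le_aleph0 {β : Ordinal} (h : β.card ≤ ℵ₀) :
    (Set.Iio β).Countable := by
  rw [← le_aleph0_iff_set_countable, Cardinal.mk_Iio_ordinal, lift_le_aleph0]
  exact h

lemma card_omega0_opow_le_aleph0 {β : Ordinal} (h : β.card ≤ ℵ₀) : (ω ^ β).card ≤ ℵ₀ :=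
  (card_opow_le _ _).trans (by simp [h])

theorem runSeq_mem_fullSeqSet {α : Ordinal} (hα : α < ω₁) (p : Ordinal → Real') :
    runSeq α p ∈ FullSeqSet α := by
  intro η
  have hη : η.1.card ≤ ℵ₀ := (card_le_card η.2.le).trans
    (card_omega0_opow_le_aleph0 (lt_aleph_one_iff.1 (lt_omega_iff_card_lt.1 hα)))
  have hblock : (ω * (1 + η.1)).card ≤ ℵ₀ := by
    rw [card_mul, card_add, card_one, card_omega0]
    exact (mul_le_max _ _).trans
      (max_le (max_le le_rfl (add_le_aleph0.2 ⟨one_le_aleph0, hη⟩)) le_rfl)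
  refine ((countable_Iio_of_card_le_aleph0 hblock).image p).mono ?_
  rintro y ⟨ξ, hξ, rfl⟩
  exact ⟨ξ, hξ, rfl⟩

end Countability

section Blocks

def finitePart (ξ : Ordinal) : ℕ :=
  Classical.choose (lt_omega0.1 (mod_lt ξ omega0_ne_zero))

lemma omega0_mul_div_add_finitePart (ξ : Ordinal) : ω * (ξ / ω) + finitePart ξ = ξ := by
  rw [finitePart, ← Classical.choose_spec (lt_omega0.1 (mod_lt ξ omega0_ne_zero)),
    div_add_mod]

lemma omega0_mul_add_natCast_div (η : Ordinal) (n : ℕ) : (ω * η + n) / ω = η := by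
  rw [mul_add_div _ omega0_ne_zero, div_eq_zero_of_lt (natCast_lt_omega0 n), add_zero]

lemma finitePart_omega0_mul_add_natCast (η : Ordinal) (n : ℕ) :
    finitePart (ω * η + n) = n := by
  have h := omega0_mul_div_add_finitePart (ω * η + n)
  rw [omega0_mul_add_natCast_div, add_right_inj] at h
  exact_mod_cast h

lemma omega0_mul_add_natCast_lt_omega0_mul_iff {η β : Ordinal} (n : ℕ) :
    ω * η + n < ω * β ↔ η < β := by
  refine ⟨fun h => ?_, fun h => ?_⟩
  · by_contra! hβ
    exact (h.trans_le ((mul_le_mul_right hβ ω).trans le_self_add)).false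
  · calc ω * η + n < ω * η + ω := add_lt_add_right (natCast_lt_omega0 n) _
      _ = ω * Order.succ η := (mul_succ ω η).symm
      _ ≤ ω * β := mul_le_mul_right (Order.succ_le_of_lt h) ω

lemma ordEven_omega0_mul_add_natCast_iff (η : Ordinal) (n : ℕ) :
    OrdEven (ω * η + n) ↔ Even n := by
  constructor
  · rintro ⟨l, m, hl, hξ⟩
    obtain ⟨d, rfl⟩ : ω ∣ l := by
      rcases hl with rfl | hl
      · exact dvd_zero _
      · exact isSuccPrelimit_iff_omega0_dvd.1 hl.isSuccPrelimit
    have hmod := congrArg (· % ω) hξ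
    simp only [mul_add_mod_self] at hmod
    rw [show (2 : Ordinal) * m = ((2 * m : ℕ) : Ordinal) by norm_cast,
      mod_eq_of_lt (natCast_lt_omega0 _), mod_eq_of_lt (natCast_lt_omega0 _), Nat.cast_inj] at hmod
    exact ⟨m, by omega⟩
  · rintro ⟨m, rfl⟩
    have hm : ((m + m : ℕ) : Ordinal) = 2 * m := by norm_cast; omega
    rcases eq_or_ne η 0 with rfl | hη
    · exact ⟨0, m, Or.inl rfl, by rw [mul_zero, zero_add, zero_add, hm]⟩
    · exact ⟨ω * η, m, Or.inr (isSuccLimit_mul_left isSuccLimit_omega0 hη.bot_lt), by rw [hm]⟩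

lemma omega0_mul_add_natCast_lt_iff {η η' : Ordinal} {m n : ℕ} :
    ω * η + m < ω * η' + n ↔ η < η' ∨ η = η' ∧ m < n := by
  refine ⟨fun h => ?_, ?_⟩
  · rcases lt_trichotomy η η' with hlt | rfl | hgt
    · exact Or.inl hlt
    · exact Or.inr ⟨rfl, by exact_mod_cast (add_lt_add_iff_left _).1 h⟩
    · exact absurd ((h.trans ((omega0_mul_add_natCast_lt_omega0_mul_iff n).2 hgt)).trans_le
        le_self_add) (lt_irrefl _)
  · rintro (hlt | ⟨rfl, hmn⟩)
    · exact ((omega0_mul_add_natCast_lt_omega0_mul_iff m).2 hlt).trans_le le_self_add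
    · exact add_lt_add_right (by exact_mod_cast hmn) _

lemma exists_eq_omega0_mul_add_odd {ζ : Ordinal} (hζ : ¬ OrdEven ζ) :
    ∃ η : Ordinal, ∃ k : ℕ, ζ = ω * η + ((2 * k + 1 : ℕ) : Ordinal) := by
  rw [← omega0_mul_div_add_finitePart ζ, ordEven_omega0_mul_add_natCast_iff,
    Nat.not_even_iff_odd] at hζ
  obtain ⟨k, hk⟩ := hζ
  exact ⟨ζ / ω, k, by rw [← hk, omega0_mul_div_add_finitePart]⟩

end Blocks

section Lanes

def lane (r m : ℕ) : ℕ := if m % 2 = 0 then m / 2 else 4 * (m / 2) + r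

lemma lane_two_mul (r n : ℕ) : lane r (2 * n) = n := by
  unfold lane; split <;> omega

lemma lane_two_mul_add_one (r k : ℕ) : lane r (2 * k + 1) = 4 * k + r := by
  unfold lane; split <;> omega

lemma lane_lt {r m k : ℕ} (hr : 1 ≤ r) (hm : m < 2 * k + 1) : lane r m < 4 * k + r := by
  unfold lane; split <;> omega

def simIdx (r : ℕ) (ζ : Ordinal) : Ordinal := ω * (ζ / ω) + lane r (finitePart ζ)

lemma simIdx_omega0_mul_add_natCast (r : ℕ) (η : Ordinal) (n : ℕ) :
    simIdx r (ω * η + n) = ω * η + lane r n := by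
  rw [simIdx, omega0_mul_add_natCast_div, finitePart_omega0_mul_add_natCast]

lemma simIdx_lt {r k : ℕ} {η ζ : Ordinal} (hr : 1 ≤ r)
    (hζ : ζ < ω * η + ((2 * k + 1 : ℕ) : Ordinal)) :
    simIdx r ζ < ω * η + ((4 * k + r : ℕ) : Ordinal) := by
  rw [← omega0_mul_div_add_finitePart ζ] at hζ
  rw [simIdx]
  rcases omega0_mul_add_natCast_lt_iff.1 hζ with hlt | ⟨heq, hn⟩
  · exact omega0_mul_add_natCast_lt_iff.2 (Or.inl hlt)
  · exact omega0_mul_add_natCast_lt_iff.2 (Or.inr ⟨heq, lane_lt hr hn⟩)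

lemma runSeq_comp_simIdx (α : Ordinal) (r : ℕ) (p : Ordinal → Real') :
    runSeq α (fun ζ => p (simIdx r ζ)) = runSeq α p := by
  ext η y
  constructor
  · rintro ⟨ξ, hξ, rfl⟩
    exact ⟨simIdx r ξ, (omega0_mul_add_natCast_lt_omega0_mul_iff _).2 ((lt_mul_iff_div_lt omega0_ne_zero).1 hξ), rfl⟩
  · rintro ⟨ξ, hξ, rfl⟩
    refine ⟨ω * (ξ / ω) + ((2 * finitePart ξ : ℕ) : Ordinal),
      (omega0_mul_add_natCast_lt_omega0_mul_iff _).2 ((lt_mul_iff_div_lt omega0_ne_zero).1 hξ), ?_⟩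
    show p ξ = p (simIdx r _)
    show p ξ = p (simIdx r _)
    rw [simIdx_omega0_mul_add_natCast, lane_two_mul, omega0_mul_div_add_finitePart]

end Lanes

section Strategies

def extendPos {ξ : Ordinal} (pos : Set.Iio ξ → Real') (ζ : Ordinal) : Real' :=
  if h : ζ < ξ then pos ⟨ζ, h⟩ else default

/-- Plays the move `ω * η + (4 * k + r)` as `F` plays `ω * η + (2 * k + 1)` in the game whose
moves `ω * η + 2 * n` are the moves `ω * η + n` of the actual game. -/
def laneStrategy (r : ℕ) (F : StratII) : StratII := fun ξ pos =>
  F (ω * (ξ / ω) + ((2 * (finitePart ξ / 4) + 1 : ℕ) : Ordinal))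
    (fun ζ => extendPos pos (simIdx r ζ.1))

def combine (F₁ F₂ : StratII) : StratII := fun ξ =>
  if finitePart ξ % 4 = 1 then laneStrategy 1 F₁ ξ else laneStrategy 3 F₂ ξ

lemma follows_comp_simIdx {α : Ordinal} {r : ℕ} {F G : StratII} {p : Ordinal → Real'}
    (hr : r % 2 = 1) (hr4 : r < 4)
    (hG : ∀ (η : Ordinal) (k : ℕ), G (ω * η + ((4 * k + r : ℕ) : Ordinal)) =
      laneStrategy r F (ω * η + ((4 * k + r : ℕ) : Ordinal)))
    (hp : Follows α G p) : Follows α F (fun ζ => p (simIdx r ζ)) := by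
  intro ζ hζ hodd
  obtain ⟨η, k, rfl⟩ := exists_eq_omega0_mul_add_odd hodd
  have hωα : ω ^ (1 + α) = ω * ω ^ α := by rw [opow_add, opow_one]
  have hξ : ω * η + ((4 * k + r : ℕ) : Ordinal) < ω ^ (1 + α) := by
    rw [hωα, omega0_mul_add_natCast_lt_omega0_mul_iff] at hζ ⊢
    exact hζ
  have hξodd : ¬ OrdEven (ω * η + ((4 * k + r : ℕ) : Ordinal)) := by
    rw [ordEven_omega0_mul_add_natCast_iff, Nat.even_iff]
    omega
  have hpos : (fun ζ' : Set.Iio (ω * η + ((2 * k + 1 : ℕ) : Ordinal)) =>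
      extendPos (fun z : Set.Iio (ω * η + ((4 * k + r : ℕ) : Ordinal)) => p z.1)
        (simIdx r ζ'.1)) = fun ζ' => p (simIdx r ζ'.1) :=
    funext fun ζ' => dif_pos (simIdx_lt (by omega) ζ'.2)
  calc p (simIdx r (ω * η + ((2 * k + 1 : ℕ) : Ordinal)))
      = p (ω * η + ((4 * k + r : ℕ) : Ordinal)) := by
        rw [simIdx_omega0_mul_add_natCast, lane_two_mul_add_one]
    _ = laneStrategy r F (ω * η + ((4 * k + r : ℕ) : Ordinal)) (fun z => p z.1) := by
        rw [hp _ hξ hξodd, hG]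
    _ = F (ω * η + ((2 * k + 1 : ℕ) : Ordinal)) (fun ζ' => p (simIdx r ζ'.1)) := by
        rw [laneStrategy, omega0_mul_add_natCast_div, finitePart_omega0_mul_add_natCast,
          show (4 * k + r) / 4 = k by omega, hpos]

theorem winningII_inter_combine {α : Ordinal} {Z₁ Z₂ : Set (OrdSeq α)} {F₁ F₂ : StratII}
    (hF₁ : WinningII α Z₁ F₁) (hF₂ : WinningII α Z₂ F₂) :
    WinningII α (Z₁ ∩ Z₂) (combine F₁ F₂) := by
  intro p hp
  have h₁ : Follows α F₁ (fun ζ => p (simIdx 1 ζ)) :=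
    follows_comp_simIdx (by norm_num) (by norm_num) (fun η k => by
      rw [combine, finitePart_omega0_mul_add_natCast, if_pos (by omega)]) hp
  have h₂ : Follows α F₂ (fun ζ => p (simIdx 3 ζ)) :=
    follows_comp_simIdx (by norm_num) (by norm_num) (fun η k => by
      rw [combine, finitePart_omega0_mul_add_natCast, if_neg (by omega)]) hp
  exact ⟨runSeq_comp_simIdx α 1 p ▸ hF₁ _ h₁, runSeq_comp_simIdx α 3 p ▸ hF₂ _ h₂⟩

/-- Player I also plays by `F`. -/
def runOf (F : StratII) (ξ : Ordinal) : Real' := F ξ (fun ζ => runOf F ζ.1)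
termination_by ξ
decreasing_by exact ζ.2

lemma follows_runOf (α : Ordinal) (F : StratII) : Follows α F (runOf F) :=
  fun _ _ _ => by rw [runOf]

end Strategies

namespace SolovayFilter

variable {α : Ordinal}

theorem fullSeqSet_mem (hα : α < ω₁) : FullSeqSet α ∈ SolovayFilter α :=
  ⟨subset_rfl, fun _ _ => default, fun p _ => runSeq_mem_fullSeqSet hα p⟩

theorem empty_notMem : ∅ ∉ SolovayFilter α :=
  fun ⟨_, F, hF⟩ => hF _ (follows_runOf α F)

theorem mem_of_superset {Z Z' : Set (OrdSeq α)} (hZ : Z ∈ SolovayFilter α) (hZZ' : Z ⊆ Z')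
    (hZ' : Z' ⊆ FullSeqSet α) : Z' ∈ SolovayFilter α :=
  let ⟨_, F, hF⟩ := hZ
  ⟨hZ', F, fun p hp => hZZ' (hF p hp)⟩

theorem inter_mem {Z₁ Z₂ : Set (OrdSeq α)} (h₁ : Z₁ ∈ SolovayFilter α)
    (h₂ : Z₂ ∈ SolovayFilter α) : Z₁ ∩ Z₂ ∈ SolovayFilter α :=
  let ⟨hZ₁, F₁, hF₁⟩ := h₁
  let ⟨_, F₂, hF₂⟩ := h₂
  ⟨Set.inter_subset_left.trans hZ₁, combine F₁ F₂, winningII_inter_combine hF₁ hF₂⟩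

end SolovayFilter

open Ordinal in
theorem stmt5_general (α : Ordinal) (h2 : α < ω₁) :
    FullSeqSet α ∈ SolovayFilter α ∧
    ∅ ∉ SolovayFilter α ∧
    (∀ Z Z' : Set (OrdSeq α), Z ∈ SolovayFilter α → Z ⊆ Z' → Z' ⊆ FullSeqSet α →
      Z' ∈ SolovayFilter α) ∧
    (∀ Z₁ Z₂ : Set (OrdSeq α), Z₁ ∈ SolovayFilter α → Z₂ ∈ SolovayFilter α →
      Z₁ ∩ Z₂ ∈ SolovayFilter α) :=
  ⟨SolovayFilter.fullSeqSet_mem h2, SolovayFilter.empty_notMem,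
    fun _ _ => SolovayFilter.mem_of_superset, fun _ _ => SolovayFilter.inter_mem⟩

open Ordinal in
/-- For `1 ≤ α < ω₁`, the `α`-Solovay filter is a proper filter on
`[℘_{ω₁}(ℝ)]^{ω^α}`: it contains the full set, does not contain `∅`, and is closed
under supersets (within the full set) and finite intersections. -/
theorem stmt5 (α : Ordinal) (h1 : 1 ≤ α) (h2 : α < ω₁) :
    FullSeqSet α ∈ SolovayFilter α ∧
    ∅ ∉ SolovayFilter α ∧
    (∀ Z Z' : Set (OrdSeq α), Z ∈ SolovayFilter α → Z ⊆ Z' → Z' ⊆ FullSeqSet α →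
      Z' ∈ SolovayFilter α) ∧
    (∀ Z₁ Z₂ : Set (OrdSeq α), Z₁ ∈ SolovayFilter α → Z₂ ∈ SolovayFilter α →
      Z₁ ∩ Z₂ ∈ SolovayFilter α) :=
  stmt5_general α h2
end
end
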